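/- With σ and α as in the N=1 case, σ is strictly increasing on each of the intervals (0, √2) and (√2, ∞): for T ∈ (0, 4/3), σ'(T) = (3√(2π) α'(T)/(8√(−α(T))))·(tanh(√(−α(T))) + √(−α(T))/cosh²(√(−α(T)))) > 0, and for T ∈ (4/3, √2) ∪ (√2, ∞), σ'(T) = (3√(2π) α'(T)/(8√(α(T))))·(tan(√(α(T))) + √(α(T)) sec²(√(α(T)))) > 0. -/

import Mathlib

open Real Set

/-!
Write `α T = 9π²/4 - 4π²/T²`; it is strictly increasing for `T > 0`, with `α (4/3) = 0` and
`α √2 = (π/2)²`. Below `4/3`, `σ` is `-c·x·tanh x` at `x = √(-α)`; above, it is `c·x·tan x` at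
`x = √α ∈ (0, 3π/2)`, and `x = π/2` only at `T = √2`. The chain rule gives
`σ' = 3√(2π) α' / (8x) · (F x + x F' x)` for `F = tanh, tan`, and `F x + x F' x > 0`: for `tan` it
equals `(2x + sin 2x) / (2 cos² x)`. On `(0, √2)` the two branches are glued at `4/3` by signs:
`σ < 0` below, `σ (4/3) = 0`, and `σ > 0` on `(4/3, √2)` because there `x < π/2`.
-/

theorem Real.hasDerivAt_tanh (x : ℝ) : HasDerivAt tanh (1 / cosh x ^ 2) x := by
  have h := (hasDerivAt_sinh x).div (hasDerivAt_cosh x) (cosh_pos x).ne'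
  rw [show tanh = fun y => sinh y / cosh y from funext tanh_eq_sinh_div_cosh]
  refine h.congr_deriv ?_
  field_simp
  linarith [cosh_sq_sub_sinh_sq x]

theorem Real.tanh_pos {x : ℝ} (hx : 0 < x) : 0 < tanh x := by
  rw [tanh_eq_sinh_div_cosh]
  exact div_pos (sinh_pos_iff.2 hx) (cosh_pos x)

theorem Real.tanh_add_div_cosh_sq_pos {x : ℝ} (hx : 0 < x) : 0 < tanh x + x / cosh x ^ 2 :=
  add_pos (tanh_pos hx) (div_pos hx (pow_pos (cosh_pos x) 2))

theorem Real.tan_add_div_cos_sq_pos {x : ℝ} (hx : 0 < x) (hcos : cos x ≠ 0) :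
    0 < tan x + x / cos x ^ 2 := by
  have hsin : -sin (2 * x) < 2 * x := by
    have := abs_sin_lt_abs (mul_pos two_pos hx).ne'
    rw [abs_of_pos (mul_pos two_pos hx)] at this
    linarith [neg_abs_le (sin (2 * x))]
  have key : tan x + x / cos x ^ 2 = (2 * x + sin (2 * x)) / (2 * cos x ^ 2) := by
    rw [tan_eq_sin_div_cos, sin_two_mul]
    field_simp
    ring
  rw [key]
  exact div_pos (by linarith) (by positivity)

theorem Real.cos_ne_zero_of_lt_of_lt_of_ne {x : ℝ} (h₀ : -(π / 2) < x) (h₃ : x < 3 * π / 2)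
    (hne : x ≠ π / 2) : cos x ≠ 0 := by
  rcases hne.lt_or_gt with h | h
  · exact (cos_pos_of_mem_Ioo ⟨h₀, h⟩).ne'
  · exact (cos_neg_of_pi_div_two_lt_of_lt h (by linarith)).ne

theorem HasDerivAt.const_mul_sqrt_mul_comp_sqrt (c : ℝ) {F h : ℝ → ℝ} {F' h' T : ℝ}
    (hh : HasDerivAt h h' T) (hpos : 0 < h T) (hF : HasDerivAt F F' √(h T)) :
    HasDerivAt (fun t => c * √(h t) * F √(h t))
      (c * h' / (2 * √(h T)) * (F √(h T) + √(h T) * F')) T := by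
  have hs := hh.sqrt hpos.ne'
  exact ((hs.const_mul c).mul (hF.comp T hs)).congr_deriv (by rw [Function.comp_apply]; ring)

theorem strictMonoOn_of_hasDerivAt_pos {f f' : ℝ → ℝ} {s : Set ℝ} (hs : Convex ℝ s)
    (hf : ∀ x ∈ s, HasDerivAt f (f' x) x) (hf' : ∀ x ∈ s, 0 < f' x) : StrictMonoOn f s :=
  strictMonoOn_of_hasDerivWithinAt_pos hs (fun x hx => (hf x hx).continuousAt.continuousWithinAt)
    (fun x hx => (hf x (interior_subset hx)).hasDerivWithinAt)
    (fun x hx => hf' x (interior_subset hx))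

theorem StrictMonoOn.Ioo_of_Ioo_of_Ioo {α β : Type*} [LinearOrder α] [Preorder β] {f : α → β}
    {a b c : α} (h₁ : StrictMonoOn f (Ioo a b)) (h₂ : StrictMonoOn f (Ioo b c))
    (hlt : ∀ x ∈ Ioo a b, f x < f b) (hgt : ∀ x ∈ Ioo b c, f b < f x) :
    StrictMonoOn f (Ioo a c) := by
  intro x hx y hy hxy
  rcases lt_trichotomy x b with hxb | rfl | hbx
  · rcases lt_trichotomy y b with hyb | rfl | hby
    · exact h₁ ⟨hx.1, hxb⟩ ⟨hy.1, hyb⟩ hxy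
    · exact hlt x ⟨hx.1, hxb⟩
    · exact (hlt x ⟨hx.1, hxb⟩).trans (hgt y ⟨hby, hy.2⟩)
  · exact hgt y ⟨hxy, hy.2⟩
  · exact h₂ ⟨hbx, hx.2⟩ ⟨hbx.trans hxy, hy.2⟩ hxy

noncomputable def alpha (T : ℝ) : ℝ := 9 * π ^ 2 / 4 - 4 * π ^ 2 / T ^ 2

theorem strictMonoOn_alpha : StrictMonoOn alpha (Ioi 0) := by
  intro a (ha : 0 < a) b _ hab
  have : 4 * π ^ 2 / b ^ 2 < 4 * π ^ 2 / a ^ 2 := by gcongr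
  simp only [alpha]
  linarith

theorem alpha_four_thirds : alpha (4 / 3) = 0 := by
  simp only [alpha]
  ring

theorem alpha_sqrt_two : alpha √2 = (π / 2) ^ 2 := by
  simp only [alpha, sq_sqrt zero_le_two]
  ring

theorem alpha_lt {T : ℝ} (hT : 0 < T) : alpha T < (3 * π / 2) ^ 2 := by
  have : 0 < 4 * π ^ 2 / T ^ 2 := by positivity
  simp only [alpha]
  linarith [show (3 * π / 2) ^ 2 = 9 * π ^ 2 / 4 by ring]

theorem hasDerivAt_alpha {T : ℝ} (hT : T ≠ 0) : HasDerivAt alpha (8 * π ^ 2 / T ^ 3) T := by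
  have h := (hasDerivAt_const T (9 * π ^ 2 / 4)).sub
    ((hasDerivAt_const T (4 * π ^ 2)).div (hasDerivAt_pow 2 T) (pow_ne_zero 2 hT))
  refine h.congr_deriv ?_
  field_simp
  ring

noncomputable def sigmaHyp (T : ℝ) : ℝ :=
  -(3 * √(2 * π) / 4) * √(-alpha T) * tanh √(-alpha T)

noncomputable def sigmaTrig (T : ℝ) : ℝ :=
  3 * √(2 * π) / 4 * √(alpha T) * tan √(alpha T)

noncomputable def sigmaHypDeriv (T : ℝ) : ℝ :=
  3 * √(2 * π) * (8 * π ^ 2 / T ^ 3) / (8 * √(-alpha T)) *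
    (tanh √(-alpha T) + √(-alpha T) / cosh √(-alpha T) ^ 2)

noncomputable def sigmaTrigDeriv (T : ℝ) : ℝ :=
  3 * √(2 * π) * (8 * π ^ 2 / T ^ 3) / (8 * √(alpha T)) *
    (tan √(alpha T) + √(alpha T) / cos √(alpha T) ^ 2)

section HyperbolicBranch

variable {T : ℝ} (hT₀ : 0 < T) (hT : T < 4 / 3)
include hT₀ hT

theorem sqrt_neg_alpha_pos : 0 < √(-alpha T) := by
  have := strictMonoOn_alpha (mem_Ioi.2 hT₀) (by norm_num : (4 / 3 : ℝ) ∈ Ioi 0) hT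
  rw [alpha_four_thirds] at this
  exact sqrt_pos.2 (neg_pos.2 this)

theorem hasDerivAt_sigmaHyp : HasDerivAt sigmaHyp (sigmaHypDeriv T) T := by
  have hs := sqrt_neg_alpha_pos hT₀ hT
  refine ((hasDerivAt_alpha hT₀.ne').fun_neg.const_mul_sqrt_mul_comp_sqrt (-(3 * √(2 * π) / 4))
    (sqrt_pos.1 hs) (hasDerivAt_tanh _)).congr_deriv ?_
  simp only [sigmaHypDeriv]
  field_simp
  ring

theorem sigmaHyp_neg : sigmaHyp T < 0 := by
  have hs := sqrt_neg_alpha_pos hT₀ hT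
  have : 0 < 3 * √(2 * π) / 4 * √(-alpha T) * tanh √(-alpha T) := by
    have := tanh_pos hs
    positivity
  simp only [sigmaHyp]
  linarith

theorem sigmaHypDeriv_pos : 0 < sigmaHypDeriv T := by
  have hs := sqrt_neg_alpha_pos hT₀ hT
  exact mul_pos (by positivity) (tanh_add_div_cosh_sq_pos hs)

end HyperbolicBranch

section TrigonometricBranch

variable {T : ℝ} (hT : 4 / 3 < T)
include hT

theorem sqrt_alpha_pos : 0 < √(alpha T) := by
  have := strictMonoOn_alpha (by norm_num : (4 / 3 : ℝ) ∈ Ioi 0) (mem_Ioi.2 (by linarith)) hT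
  rw [alpha_four_thirds] at this
  exact sqrt_pos.2 this

theorem sqrt_alpha_lt_pi_div_two (hT₂ : T < √2) : √(alpha T) < π / 2 := by
  rw [sqrt_lt' (by positivity), ← alpha_sqrt_two]
  exact strictMonoOn_alpha (mem_Ioi.2 (by linarith)) (mem_Ioi.2 (by positivity)) hT₂

theorem cos_sqrt_alpha_ne_zero (hT₂ : T ≠ √2) : cos √(alpha T) ≠ 0 := by
  have hT₀ : 0 < T := by linarith
  have hs := sqrt_alpha_pos hT
  refine cos_ne_zero_of_lt_of_lt_of_ne (by linarith [pi_pos])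
    ((sqrt_lt' (by positivity)).2 (alpha_lt hT₀)) fun h => hT₂ ?_
  refine strictMonoOn_alpha.injOn (mem_Ioi.2 hT₀) (mem_Ioi.2 (by positivity)) ?_
  rw [alpha_sqrt_two, ← h, sq_sqrt (sqrt_pos.1 hs).le]

theorem hasDerivAt_sigmaTrig (hT₂ : T ≠ √2) : HasDerivAt sigmaTrig (sigmaTrigDeriv T) T := by
  have hs := sqrt_alpha_pos hT
  have hcos := cos_sqrt_alpha_ne_zero hT hT₂
  refine ((hasDerivAt_alpha (by linarith)).const_mul_sqrt_mul_comp_sqrt (3 * √(2 * π) / 4)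
    (sqrt_pos.1 hs) (hasDerivAt_tan hcos)).congr_deriv ?_
  simp only [sigmaTrigDeriv]
  field_simp
  ring

theorem sigmaTrig_pos (hT₂ : T < √2) : 0 < sigmaTrig T := by
  have hs := sqrt_alpha_pos hT
  have := tan_pos_of_pos_of_lt_pi_div_two hs (sqrt_alpha_lt_pi_div_two hT hT₂)
  simp only [sigmaTrig]
  positivity

theorem sigmaTrigDeriv_pos (hT₂ : T ≠ √2) : 0 < sigmaTrigDeriv T := by
  have hs := sqrt_alpha_pos hT
  have : 0 < T := by linarith
  exact mul_pos (by positivity) (tan_add_div_cos_sq_pos hs (cos_sqrt_alpha_ne_zero hT hT₂))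

end TrigonometricBranch

theorem stmt_19 (σ : ℝ → ℝ)
    (hσ1 : ∀ T ∈ Set.Ioo (0:ℝ) (4/3),
      σ T = -(3 * Real.sqrt (2 * π) / 4) *
        Real.sqrt (-(9 * π^2 / 4 - 4 * π^2 / T^2)) *
        Real.tanh (Real.sqrt (-(9 * π^2 / 4 - 4 * π^2 / T^2))))
    (hσ2 : σ (4/3) = 0)
    (hσ3 : ∀ T : ℝ, 4/3 < T → T ≠ Real.sqrt 2 →
      σ T = (3 * Real.sqrt (2 * π) / 4) *
        Real.sqrt (9 * π^2 / 4 - 4 * π^2 / T^2) *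
        Real.tan (Real.sqrt (9 * π^2 / 4 - 4 * π^2 / T^2))) :
    StrictMonoOn σ (Set.Ioo (0:ℝ) (Real.sqrt 2)) ∧
    StrictMonoOn σ (Set.Ioi (Real.sqrt 2)) ∧
    (∀ T ∈ Set.Ioo (0:ℝ) (4/3),
      deriv σ T = (3 * Real.sqrt (2 * π) * (8 * π^2 / T^3) /
          (8 * Real.sqrt (-(9 * π^2 / 4 - 4 * π^2 / T^2)))) *
        (Real.tanh (Real.sqrt (-(9 * π^2 / 4 - 4 * π^2 / T^2))) +
          Real.sqrt (-(9 * π^2 / 4 - 4 * π^2 / T^2)) /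
            (Real.cosh (Real.sqrt (-(9 * π^2 / 4 - 4 * π^2 / T^2))))^2) ∧
      0 < deriv σ T) ∧
    (∀ T : ℝ, (T ∈ Set.Ioo (4/3 : ℝ) (Real.sqrt 2) ∨ Real.sqrt 2 < T) →
      deriv σ T = (3 * Real.sqrt (2 * π) * (8 * π^2 / T^3) /
          (8 * Real.sqrt (9 * π^2 / 4 - 4 * π^2 / T^2))) *
        (Real.tan (Real.sqrt (9 * π^2 / 4 - 4 * π^2 / T^2)) +
          Real.sqrt (9 * π^2 / 4 - 4 * π^2 / T^2) /
            (Real.cos (Real.sqrt (9 * π^2 / 4 - 4 * π^2 / T^2)))^2) ∧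
      0 < deriv σ T) := by
  have h43 : (4 / 3 : ℝ) < √2 := (lt_sqrt (by norm_num)).2 (by norm_num)
  have hHyp (T : ℝ) (hT : T ∈ Ioo (0 : ℝ) (4 / 3)) : HasDerivAt σ (sigmaHypDeriv T) T :=
    (hasDerivAt_sigmaHyp hT.1 hT.2).congr_of_eventuallyEq
      (Filter.eventuallyEq_of_mem (isOpen_Ioo.mem_nhds hT) hσ1)
  have hTrig (T : ℝ) (hT : 4 / 3 < T) (hT₂ : T ≠ √2) : HasDerivAt σ (sigmaTrigDeriv T) T :=
    (hasDerivAt_sigmaTrig hT hT₂).congr_of_eventuallyEq <| Filter.eventuallyEq_of_mem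
      ((isOpen_Ioi.inter isOpen_compl_singleton).mem_nhds ⟨hT, hT₂⟩) fun t ht => hσ3 t ht.1 ht.2
  refine ⟨?_, ?_, fun T hT => ?_, fun T hT => ?_⟩
  · refine StrictMonoOn.Ioo_of_Ioo_of_Ioo
      (strictMonoOn_of_hasDerivAt_pos (convex_Ioo _ _) hHyp
        fun T hT => sigmaHypDeriv_pos hT.1 hT.2)
      (strictMonoOn_of_hasDerivAt_pos (convex_Ioo _ _) (fun T hT => hTrig T hT.1 hT.2.ne)
        fun T hT => sigmaTrigDeriv_pos hT.1 hT.2.ne) (fun T hT => ?_) (fun T hT => ?_)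
    · rw [hσ2, hσ1 T hT]
      exact sigmaHyp_neg hT.1 hT.2
    · rw [hσ2, hσ3 T hT.1 hT.2.ne]
      exact sigmaTrig_pos hT.1 hT.2
  · exact strictMonoOn_of_hasDerivAt_pos (convex_Ioi _)
      (fun T hT => hTrig T (h43.trans hT) hT.ne') fun T hT => sigmaTrigDeriv_pos (h43.trans hT) hT.ne'
  · rw [(hHyp T hT).deriv]
    exact ⟨rfl, sigmaHypDeriv_pos hT.1 hT.2⟩
  · obtain ⟨hT, hT₂⟩ : 4 / 3 < T ∧ T ≠ √2 := hT.elim (fun h => ⟨h.1, h.2.ne⟩)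
      fun h => ⟨h43.trans h, h.ne'⟩
    rw [(hTrig T hT hT₂).deriv]
    exact ⟨rfl, sigmaTrigDeriv_pos hT hT₂⟩
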